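/- In the Gaussian kernel setting, for any ε > 0, any multiset D_n of noisy observations, any point x ∈ 𝒳, and any multiset B ⊆ S satisfying Var(f_x | D_n, y_B) ≤ η_S²(x) + ε (an ε-approximate Markov boundary of x in S), the posterior variance satisfies σ_n²(x) ≤ 2σ² · I(f_x; y_B | D_n) + η_S²(x) + ε, where σ² = max_{x∈𝒳} k(x,x). -/

import Mathlib

open Matrix Real

namespace TransductiveAL

variable {ι : Type*}

/-- Kernel matrix of the kernel `k` over the (multi-)list of points `X`. -/
noncomputable def kerMat (k : Matrix ι ι ℝ) (X : List ι) :
    Matrix (Fin X.length) (Fin X.length) ℝ :=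
  Matrix.of fun i j => k (X.get i) (X.get j)

/-- Diagonal noise covariance matrix `P_X` over the (multi-)list of points `X`. -/
noncomputable def noiseMat (ρ2 : ι → ℝ) (X : List ι) :
    Matrix (Fin X.length) (Fin X.length) ℝ :=
  Matrix.diagonal fun i => ρ2 (X.get i)

/-- Posterior covariance `Cov(f_x, f_{x'} ∣ y_X)` after noisy observations at the points of `X`
(Schur complement formula `k(x,x') − K_{xX}(K_{XX}+P_X)⁻¹K_{Xx'}`). -/
noncomputable def postCov (k : Matrix ι ι ℝ) (ρ2 : ι → ℝ) (X : List ι) (x x' : ι) : ℝ :=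
  k x x' - ∑ i : Fin X.length, ∑ j : Fin X.length,
    k x (X.get i) * (kerMat k X + noiseMat ρ2 X)⁻¹ i j * k (X.get j) x'

/-- Posterior variance `Var(f_x ∣ y_X)`. -/
noncomputable def postVar (k : Matrix ι ι ℝ) (ρ2 : ι → ℝ) (X : List ι) (x : ι) : ℝ :=
  postCov k ρ2 X x x

/-- Posterior covariance matrix `Var(f_A ∣ y_D)` of the target vector `f_A` given
noisy observations at `D`. -/
noncomputable def targetCov [DecidableEq ι] (k : Matrix ι ι ℝ) (ρ2 : ι → ℝ)
    (A : Finset ι) (D : List ι) : Matrix A A ℝ :=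
  Matrix.of fun x x' => postCov k ρ2 D x.1 x'.1

/-- Information gain `I(f_A; y_B ∣ D) = ½(log det Var(f_A ∣ D) − log det Var(f_A ∣ D, y_B))`. -/
noncomputable def iGain [DecidableEq ι] (k : Matrix ι ι ℝ) (ρ2 : ι → ℝ)
    (A : Finset ι) (D B : List ι) : ℝ :=
  (1 / 2) * (Real.log (targetCov k ρ2 A D).det - Real.log (targetCov k ρ2 A (D ++ B)).det)

/-- Information gain `I(f_x; y_B ∣ D) = ½ log (Var(f_x ∣ D) / Var(f_x ∣ D, y_B))`
for a single target point `x`. -/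
noncomputable def pointGain (k : Matrix ι ι ℝ) (ρ2 : ι → ℝ) (x : ι) (D B : List ι) : ℝ :=
  (1 / 2) * (Real.log (postVar k ρ2 D x) - Real.log (postVar k ρ2 (D ++ B) x))

/-- Maximum information gain `γ_n` obtainable from `n` noisy observations within `S`. -/
noncomputable def maxInfoGain [DecidableEq ι] (k : Matrix ι ι ℝ) (ρ2 : ι → ℝ)
    (S : Finset ι) (n : ℕ) : ℝ :=
  sSup { v | ∃ X : List ι, X.length ≤ n ∧ (∀ x ∈ X, x ∈ S) ∧
    v = (1 / 2) * Real.log (1 + (noiseMat ρ2 X)⁻¹ * kerMat k X).det }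

/-- Step-wise ITL objective value `Γ = max_{x ∈ S} I(f_A; y_x ∣ D)`. -/
noncomputable def stepGain [DecidableEq ι] (k : Matrix ι ι ℝ) (ρ2 : ι → ℝ)
    (A S : Finset ι) (D : List ι) : ℝ :=
  sSup { v | ∃ x ∈ S, v = iGain k ρ2 A D [x] }

/-- Kernel matrix `K_SS` restricted to a finset `S`. -/
noncomputable def kerMatOn (k : Matrix ι ι ℝ) (S : Finset ι) : Matrix S S ℝ :=
  Matrix.of fun i j => k i.1 j.1

/-- Noiseless conditional variance `Var(f_x ∣ f_S) = k(x,x) − K_{xS} K_SS⁻¹ K_{Sx}`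
(the irreducible uncertainty `η_S²(x)`). -/
noncomputable def noiselessCondVar [DecidableEq ι] (k : Matrix ι ι ℝ) (S : Finset ι)
    (x : ι) : ℝ :=
  k x x - ∑ i : S, ∑ j : S, k x i.1 * (kerMatOn k S)⁻¹ i j * k j.1 x

/-- List of the first `n` observation points of a sequence. -/
def obsList (xs : ℕ → ι) (n : ℕ) : List ι := (List.range n).map xs

/-- The sequence `xs` follows the ITL decision rule
`xᵢ ∈ argmax_{x ∈ S} I(f_A; y_x ∣ D_{i-1})`. -/
def IsITL [DecidableEq ι] (k : Matrix ι ι ℝ) (ρ2 : ι → ℝ) (A S : Finset ι)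
    (xs : ℕ → ι) : Prop :=
  ∀ i : ℕ, xs i ∈ S ∧ ∀ x ∈ S,
    iGain k ρ2 A (obsList xs i) [x] ≤ iGain k ρ2 A (obsList xs i) [xs i]

/-- Smallest spectral value (the smallest eigenvalue, for symmetric real matrices). -/
noncomputable def minEig {m : Type*} [Fintype m] [DecidableEq m] (M : Matrix m m ℝ) : ℝ :=
  sInf (spectrum ℝ M)


/-!
Write `a = Var(f_x ∣ y_D)` and `b = Var(f_x ∣ y_D, y_B)`. Since `b ≤ η_S²(x) + ε`, it suffices
that `a - b ≤ σ² log (a / b)`, which follows from `1 - 1/t ≤ log t` once `b ≤ a ≤ k(x,x) ≤ σ²`.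
Both inequalities come from the variational description
`Var(f_x ∣ y_X) = min_u Var(f_x - uᵀ y_X)`: the predictor `u = 0` gives `a ≤ k(x,x)`, and the
optimal predictor for `D`, extended by zeros, is a predictor for `D ++ B`, so `b ≤ a`.
If `k(x,x) = 0` both variances vanish, and so does the gain since `log 0 = 0`.
-/

theorem _root_.Matrix.PosDef.two_mul_dotProduct_sub_le_dotProduct_inv_mulVec {n : Type*}
    [Fintype n] [DecidableEq n] {M : Matrix n n ℝ} (hM : M.PosDef) (c u : n → ℝ) :
    2 * (u ⬝ᵥ c) - u ⬝ᵥ (M *ᵥ u) ≤ c ⬝ᵥ (M⁻¹ *ᵥ c) := by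
  have hinv : M *ᵥ (M⁻¹ *ᵥ c) = c := by
    rw [mulVec_mulVec, mul_nonsing_inv M hM.det_pos.ne'.isUnit, one_mulVec]
  have hsymm : u ᵥ* M = M *ᵥ u := by
    rw [← vecMul_transpose, ← conjTranspose_eq_transpose_of_trivial, hM.isHermitian]
  -- the difference of the two sides is the square `(c - M u)ᵀ M⁻¹ (c - M u)`
  have hsq := hM.inv.posSemidef.dotProduct_mulVec_nonneg (c - M *ᵥ u)
  rw [star_trivial, mulVec_sub, mulVec_mulVec, nonsing_inv_mul M hM.det_pos.ne'.isUnit,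
    one_mulVec, sub_dotProduct, dotProduct_sub, dotProduct_sub, ← hsymm, ← dotProduct_mulVec,
    hinv, ← dotProduct_mulVec, dotProduct_comm c u] at hsq
  linarith

theorem _root_.Matrix.dotProduct_extend_zero {R m n : Type*} [NonUnitalNonAssocSemiring R]
    [Fintype m] [Fintype n] {e : m → n} (he : Function.Injective e) (u : m → R) (v : n → R) :
    Function.extend e u 0 ⬝ᵥ v = u ⬝ᵥ (v ∘ e) :=
  (Fintype.sum_of_injective e he _ _
    (fun i hi => by rw [Function.extend_apply' _ _ _ hi, Pi.zero_apply, zero_mul])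
    (fun j => by rw [he.extend_apply, Function.comp_apply])).symm

theorem _root_.Matrix.dotProduct_mulVec_extend_zero {R m n : Type*} [CommSemiring R]
    [Fintype m] [Fintype n] {e : m → n} (he : Function.Injective e) (A : Matrix n n R)
    (u : m → R) :
    Function.extend e u 0 ⬝ᵥ (A *ᵥ Function.extend e u 0) = u ⬝ᵥ (A.submatrix e e *ᵥ u) := by
  have hA : A *ᵥ Function.extend e u 0 = A.submatrix id e *ᵥ u := by
    ext i
    rw [mulVec, dotProduct_comm, dotProduct_extend_zero he, dotProduct_comm]
    rfl
  rw [hA, dotProduct_extend_zero he]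
  rfl

theorem _root_.Real.sub_le_mul_log_sub_log {a b s : ℝ} (hb : 0 < b) (hba : b ≤ a)
    (has : a ≤ s) : a - b ≤ s * (log a - log b) := by
  have ha : 0 < a := hb.trans_le hba
  have hlog := one_sub_inv_le_log_of_pos (div_pos ha hb)
  rw [inv_div, log_div ha.ne' hb.ne'] at hlog
  calc a - b = a * (1 - b / a) := by field_simp
    _ ≤ a * (log a - log b) := mul_le_mul_of_nonneg_left hlog ha.le
    _ ≤ s * (log a - log b) := mul_le_mul_of_nonneg_right has (sub_nonneg.2 (log_le_log hb hba))

def kerVec (k : Matrix ι ι ℝ) (X : List ι) (x : ι) : Fin X.length → ℝ :=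
  fun i => k x (X.get i)

/-- `Var(f_x - uᵀ y_X)`, the mean squared error of the linear predictor `uᵀ y_X` of `f_x`. -/
noncomputable def residualVar (k : Matrix ι ι ℝ) (ρ2 : ι → ℝ) (X : List ι) (x : ι)
    (u : Fin X.length → ℝ) : ℝ :=
  k x x - 2 * (u ⬝ᵥ kerVec k X x) + u ⬝ᵥ ((kerMat k X + noiseMat ρ2 X) *ᵥ u)

section GaussianPosterior

variable {k : Matrix ι ι ℝ} {ρ2 : ι → ℝ}

theorem kerMat_add_noiseMat_posDef (hk : k.PosSemidef) (hρ : ∀ x, 0 < ρ2 x) (X : List ι) :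
    (kerMat k X + noiseMat ρ2 X).PosDef :=
  PosDef.posSemidef_add (hk.submatrix X.get) (PosDef.diagonal fun _ => hρ _)

theorem postVar_eq_sub_dotProduct (hk : k.IsHermitian) (X : List ι) (x : ι) :
    postVar k ρ2 X x =
      k x x - kerVec k X x ⬝ᵥ ((kerMat k X + noiseMat ρ2 X)⁻¹ *ᵥ kerVec k X x) := by
  simp only [postVar, postCov, kerVec, dotProduct, mulVec, Finset.mul_sum]
  congr 1
  refine Finset.sum_congr rfl fun i _ => Finset.sum_congr rfl fun j _ => ?_
  rw [← hk.apply (X.get j) x, star_trivial]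
  ring

theorem kerMat_residual_nonneg (hk : k.PosSemidef) (X : List ι) (x : ι)
    (u : Fin X.length → ℝ) :
    0 ≤ k x x - 2 * (u ⬝ᵥ kerVec k X x) + u ⬝ᵥ (kerMat k X *ᵥ u) := by
  have h := (hk.submatrix (x :: X).get).dotProduct_mulVec_nonneg (Fin.cons 1 (-u))
  have hsymm (i : Fin X.length) : k X[(i : ℕ)] x = k x X[(i : ℕ)] := by
    simpa using hk.isHermitian.apply x X[(i : ℕ)]
  simp only [dotProduct, List.length_cons, Pi.star_apply, star_trivial, mulVec, submatrix_apply,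
    List.get_eq_getElem, Fin.sum_univ_succ, Fin.coe_ofNat_eq_mod, Nat.zero_mod,
    List.getElem_cons_zero, Fin.cons_zero, mul_one, Fin.val_succ, List.getElem_cons_succ,
    Fin.cons_succ, Pi.neg_apply, mul_neg, Finset.sum_neg_distrib, mul_add,
    Finset.sum_add_distrib, one_mul, hsymm, neg_mul, mul_comm (k x _), neg_add_rev, neg_neg,
    kerVec, kerMat, of_apply] at h ⊢
  linarith

theorem residualVar_eq_add (X : List ι) (x : ι) (u : Fin X.length → ℝ) :
    residualVar k ρ2 X x u = (k x x - 2 * (u ⬝ᵥ kerVec k X x) + u ⬝ᵥ (kerMat k X *ᵥ u)) +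
      u ⬝ᵥ (noiseMat ρ2 X *ᵥ u) := by
  rw [residualVar, add_mulVec, dotProduct_add]
  ring

theorem residualVar_nonneg (hk : k.PosSemidef) (hρ : ∀ x, 0 ≤ ρ2 x) (X : List ι) (x : ι)
    (u : Fin X.length → ℝ) : 0 ≤ residualVar k ρ2 X x u := by
  rw [residualVar_eq_add]
  refine add_nonneg (kerMat_residual_nonneg hk X x u) ?_
  simpa [noiseMat] using (PosSemidef.diagonal fun i => hρ (X.get i)).dotProduct_mulVec_nonneg u

theorem residualVar_pos (hk : k.PosSemidef) (hρ : ∀ x, 0 < ρ2 x) (X : List ι) {x : ι}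
    (hx : 0 < k x x) (u : Fin X.length → ℝ) : 0 < residualVar k ρ2 X x u := by
  rcases eq_or_ne u 0 with rfl | hu
  · simpa [residualVar] using hx
  rw [residualVar_eq_add]
  refine add_pos_of_nonneg_of_pos (kerMat_residual_nonneg hk X x u) ?_
  simpa [noiseMat] using (PosDef.diagonal fun i => hρ (X.get i)).dotProduct_mulVec_pos hu

theorem residualVar_extend_zero {X Y : List ι} {e : Fin X.length → Fin Y.length}
    (he : Function.Injective e) (hget : ∀ i, Y.get (e i) = X.get i) (x : ι)
    (u : Fin X.length → ℝ) :
    residualVar k ρ2 Y x (Function.extend e u 0) = residualVar k ρ2 X x u := by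
  have hvec : kerVec k Y x ∘ e = kerVec k X x := funext fun i => congrArg (k x) (hget i)
  have hmat : (kerMat k Y + noiseMat ρ2 Y).submatrix e e = kerMat k X + noiseMat ρ2 X := by
    ext i j
    simp only [submatrix_apply, Matrix.add_apply, kerMat, noiseMat, of_apply, diagonal_apply,
      he.eq_iff, hget]
  rw [residualVar, residualVar, dotProduct_extend_zero he, hvec,
    dotProduct_mulVec_extend_zero he, hmat]

theorem postVar_le_residualVar (hk : k.PosSemidef) (hρ : ∀ x, 0 < ρ2 x) (X : List ι) (x : ι)
    (u : Fin X.length → ℝ) : postVar k ρ2 X x ≤ residualVar k ρ2 X x u := by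
  have := (kerMat_add_noiseMat_posDef hk hρ X).two_mul_dotProduct_sub_le_dotProduct_inv_mulVec
    (kerVec k X x) u
  rw [postVar_eq_sub_dotProduct hk.isHermitian, residualVar]
  linarith

theorem residualVar_inv_mulVec_kerVec (hk : k.PosSemidef) (hρ : ∀ x, 0 < ρ2 x) (X : List ι)
    (x : ι) :
    residualVar k ρ2 X x ((kerMat k X + noiseMat ρ2 X)⁻¹ *ᵥ kerVec k X x) = postVar k ρ2 X x := by
  rw [residualVar, postVar_eq_sub_dotProduct hk.isHermitian, mulVec_mulVec,
    mul_nonsing_inv _ (kerMat_add_noiseMat_posDef hk hρ X).det_pos.ne'.isUnit, one_mulVec,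
    dotProduct_comm]
  ring

theorem postVar_le_diag (hk : k.PosSemidef) (hρ : ∀ x, 0 < ρ2 x) (X : List ι) (x : ι) :
    postVar k ρ2 X x ≤ k x x := by
  simpa [residualVar] using postVar_le_residualVar hk hρ X x 0

theorem postVar_nonneg (hk : k.PosSemidef) (hρ : ∀ x, 0 < ρ2 x) (X : List ι) (x : ι) :
    0 ≤ postVar k ρ2 X x :=
  residualVar_inv_mulVec_kerVec hk hρ X x ▸ residualVar_nonneg hk (fun z => (hρ z).le) X x _

theorem postVar_pos (hk : k.PosSemidef) (hρ : ∀ x, 0 < ρ2 x) (X : List ι) {x : ι}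
    (hx : 0 < k x x) : 0 < postVar k ρ2 X x :=
  residualVar_inv_mulVec_kerVec hk hρ X x ▸ residualVar_pos hk hρ X hx _

theorem postVar_le_of_sublist (hk : k.PosSemidef) (hρ : ∀ x, 0 < ρ2 x) {X Y : List ι}
    (hXY : X.Sublist Y) (x : ι) : postVar k ρ2 Y x ≤ postVar k ρ2 X x := by
  obtain ⟨e, hget⟩ := List.sublist_iff_exists_fin_orderEmbedding_get_eq.1 hXY
  calc postVar k ρ2 Y x
      ≤ residualVar k ρ2 Y x
          (Function.extend e ((kerMat k X + noiseMat ρ2 X)⁻¹ *ᵥ kerVec k X x) 0) :=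
        postVar_le_residualVar hk hρ Y x _
    _ = postVar k ρ2 X x := by
        rw [residualVar_extend_zero e.injective (fun i => (hget i).symm),
          residualVar_inv_mulVec_kerVec hk hρ]

theorem postVar_sub_postVar_append_le (hk : k.PosSemidef) (hρ : ∀ x, 0 < ρ2 x) (D B : List ι)
    {x : ι} {s : ℝ} (hs : k x x ≤ s) :
    postVar k ρ2 D x - postVar k ρ2 (D ++ B) x ≤ 2 * s * pointGain k ρ2 x D B := by
  rcases hk.diag_nonneg.eq_or_lt with hx | hx
  · have hzero (X : List ι) : postVar k ρ2 X x = 0 :=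
      le_antisymm (hx ▸ postVar_le_diag hk hρ X x) (postVar_nonneg hk hρ X x)
    simp [pointGain, hzero]
  · have := sub_le_mul_log_sub_log (postVar_pos hk hρ (D ++ B) hx)
      (postVar_le_of_sublist hk hρ (List.sublist_append_left D B) x)
      ((postVar_le_diag hk hρ D x).trans hs)
    rw [pointGain]
    linarith

end GaussianPosterior

theorem postVar_le_pointGain_add_irreducible_general [Fintype ι] [DecidableEq ι]
    (k : Matrix ι ι ℝ) (ρ2 : ι → ℝ)
    (hk : k.PosSemidef) (hρ : ∀ x, 0 < ρ2 x)
    (S : Finset ι) (ε : ℝ)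
    (D : List ι) (x : ι)
    (B : List ι)
    (hmb : postVar k ρ2 (D ++ B) x ≤ noiselessCondVar k S x + ε) :
    postVar k ρ2 D x ≤
      2 * (⨆ z : ι, k z z) * pointGain k ρ2 x D B + noiselessCondVar k S x + ε := by
  have hσ : k x x ≤ ⨆ z : ι, k z z := le_ciSup (Set.finite_range fun z => k z z).bddAbove x
  have := postVar_sub_postVar_append_le hk hρ D B hσ
  linarith

/-- If `B ⊆ S` is an ε-approximate Markov boundary of `x` in `S`, i.e.
`Var(f_x ∣ D_n, y_B) ≤ η_S²(x) + ε`, then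
`σ_n²(x) ≤ 2σ² I(f_x; y_B ∣ D_n) + η_S²(x) + ε`, where `σ² = max_z k(z,z)`. -/
theorem postVar_le_pointGain_add_irreducible [Fintype ι] [DecidableEq ι] [Nonempty ι]
    (k : Matrix ι ι ℝ) (ρ2 : ι → ℝ)
    (hk : k.PosSemidef) (hρ : ∀ x, 0 < ρ2 x)
    (S : Finset ι) (ε : ℝ) (hε : 0 < ε)
    (D : List ι) (x : ι)
    (B : List ι) (hB : ∀ z ∈ B, z ∈ S)
    (hmb : postVar k ρ2 (D ++ B) x ≤ noiselessCondVar k S x + ε) :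
    postVar k ρ2 D x ≤
      2 * (⨆ z : ι, k z z) * pointGain k ρ2 x D B + noiselessCondVar k S x + ε :=
  postVar_le_pointGain_add_irreducible_general k ρ2 hk hρ S ε D x B hmb

end TransductiveAL
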